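/- arXiv:math/0611566 — 3 statements merged into one kernel-verified Lean document; each statement's English description precedes it below -/
import Mathlib

section
/- Let t > 0, let J ⊂ (0, t] be a finite set, let a : ℝ → ℝ, and let h : [0, t] → ℝ be Lebesgue integrable. Define A : [0, t] → ℝ by A(s) = Σ_{r ∈ J, r ≤ s} a(r) − ∫₀ˢ h(u) du. Then for every integer n ≥ 1: A(t)^n = n·( Σ_{r ∈ J} A(r)^{n−1} a(r) − ∫₀ᵗ A(s)^{n−1} h(s) ds ) + Σ_{i=2}^{n} (−1)^{i−1} · binom(n, i) · Σ_{r ∈ J} A(r)^{n−i} a(r)^{i}. -/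
open MeasureTheory Set intervalIntegral

lemma swap_triangle (f g : ℝ → ℝ) (u v : ℝ) (huv : u ≤ v)
    (hf : IntegrableOn f (Ioc u v)) (hg : IntegrableOn g (Ioc u v)) :
    ∫ s in u..v, (∫ r in u..s, f r) * g s = ∫ r in u..v, f r * ∫ s in r..v, g s := by
  have hmeas : MeasurableSet {p : ℝ × ℝ | p.1 ≤ p.2} :=
    measurableSet_le measurable_fst measurable_snd
  set H : ℝ × ℝ → ℝ := {p : ℝ × ℝ | p.1 ≤ p.2}.indicator (fun q => f q.1 * g q.2) with hH
  have hint : Integrable H ((volume.restrict (Ioc u v)).prod (volume.restrict (Ioc u v))) :=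
    (hf.mul_prod hg).indicator hmeas
  have key : ∫ s in Ioc u v, ∫ r in Ioc u v, H (r, s) = ∫ r in Ioc u v, ∫ s in Ioc u v, H (r, s) :=
    (integral_integral_swap (f := fun r s => H (r, s)) hint).symm
  have lhs : ∫ s in u..v, (∫ r in u..s, f r) * g s = ∫ s in Ioc u v, ∫ r in Ioc u v, H (r, s) := by
    rw [integral_of_le huv]
    refine setIntegral_congr_fun measurableSet_Ioc (fun s hs => ?_)
    have h1 : ∀ r : ℝ, H (r, s) = (Iic s).indicator (fun r => f r * g s) r := by
      intro r
      simp only [hH, indicator_apply, mem_setOf_eq, mem_Iic]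
    simp only [h1]
    rw [setIntegral_indicator measurableSet_Iic]
    have h2 : Ioc u v ∩ Iic s = Ioc u s := by
      ext x; simp only [mem_inter_iff, mem_Ioc, mem_Iic]
      exact ⟨fun ⟨⟨h1', _⟩, h3⟩ => ⟨h1', h3⟩, fun ⟨h1', h2'⟩ => ⟨⟨h1', h2'.trans hs.2⟩, h2'⟩⟩
    rw [h2, integral_of_le hs.1.le, ← MeasureTheory.integral_mul_const]
  have rhs : ∫ r in Ioc u v, ∫ s in Ioc u v, H (r, s) = ∫ r in u..v, f r * ∫ s in r..v, g s := by
    rw [integral_of_le huv]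
    refine setIntegral_congr_fun measurableSet_Ioc (fun r hr => ?_)
    have h1 : ∀ s : ℝ, H (r, s) = (Ici r).indicator (fun s => f r * g s) s := by
      intro s
      simp only [hH, indicator_apply, mem_setOf_eq, mem_Ici]
    simp only [h1]
    rw [setIntegral_indicator measurableSet_Ici]
    have h2 : Ioc u v ∩ Ici r = Icc r v := by
      ext x; simp only [mem_inter_iff, mem_Ioc, mem_Icc, mem_Ici]
      exact ⟨fun ⟨⟨_, h3⟩, h4⟩ => ⟨h4, h3⟩, fun ⟨h3, h4⟩ => ⟨⟨lt_of_lt_of_le hr.1 h3, h4⟩, h3⟩⟩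
    rw [h2, integral_Icc_eq_integral_Ioc, ← integral_of_le hr.2, intervalIntegral.integral_const_mul]
  rw [lhs, key, rhs]

lemma key_pow (h : ℝ → ℝ) (hh : Integrable h volume) :
    ∀ (k : ℕ) (u v c : ℝ), u ≤ v →
      ∫ s in u..v, (c - ∫ x in u..s, h x) ^ k * h s
        = (c ^ (k+1) - (c - ∫ x in u..v, h x) ^ (k+1)) / (k+1) := by
  intro k
  induction k with
  | zero =>
    intro u v c huv
    simp only [pow_zero, one_mul, pow_one, Nat.cast_zero, zero_add, div_one]
    ring_nf
  | succ m ih =>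
    intro u v c huv
    have hFc : Continuous (fun s : ℝ => ∫ x in u..s, h x) := hh.continuous_primitive u
    have hGint : ∀ (j : ℕ) (p q : ℝ),
        IntervalIntegrable (fun s => (c - ∫ x in u..s, h x) ^ j * h s) volume p q := by
      intro j p q
      exact (hh.intervalIntegrable).continuousOn_mul
        ((continuous_const.sub hFc).pow j).continuousOn
    set F : ℝ → ℝ := fun s => ∫ x in u..s, h x with hF
    set W : ℝ := c - F v with hW
    set I : ℝ := ∫ s in u..v, (c - F s) ^ (m+1) * h s with hI
    have hmix : ∀ p q : ℝ,
        IntervalIntegrable (fun s => F s * ((c - F s) ^ m * h s)) volume p q := by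
      intro p q
      have := (hh.intervalIntegrable (a := p) (b := q)).continuousOn_mul
        (g := fun s => F s * (c - F s) ^ m)
        ((hFc.mul ((continuous_const.sub hFc).pow m)).continuousOn)
      have heq : (fun s => F s * (c - F s) ^ m * h s)
          = fun s => F s * ((c - F s) ^ m * h s) := by funext s; ring
      rwa [heq] at this
    -- rewrite integrand
    have split : I = (∫ s in u..v, c * ((c - F s) ^ m * h s))
        - ∫ s in u..v, F s * ((c - F s) ^ m * h s) := by
      rw [← integral_sub ((hGint m u v).const_mul c) (hmix u v)]
      refine integral_congr (fun s _ => ?_)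
      ring
    -- swap the mixed term
    have swap : ∫ s in u..v, F s * ((c - F s) ^ m * h s)
        = ∫ r in u..v, h r * ∫ s in r..v, (c - F s) ^ m * h s := by
      have := swap_triangle h (fun s => (c - F s) ^ m * h s) u v huv
        hh.integrableOn
        ((intervalIntegrable_iff_integrableOn_Ioc_of_le huv).mp (hGint m u v))
      exact this
    -- evaluate inner integral using ih
    have inner : ∀ r ∈ Set.uIcc u v,
        h r * ∫ s in r..v, (c - F s) ^ m * h s
          = h r * ((c - F r) ^ (m+1) - W ^ (m+1)) / (m+1) := by
      intro r hr
      rw [uIcc_of_le huv] at hr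
      have hsplit : (∫ s in u..r, (c - F s) ^ m * h s) + ∫ s in r..v, (c - F s) ^ m * h s
          = ∫ s in u..v, (c - F s) ^ m * h s :=
        integral_add_adjacent_intervals (hGint m u r) (hGint m r v)
      have e1 := ih u r c hr.1
      have e2 := ih u v c huv
      replace e1 : ∫ s in u..r, (c - F s) ^ m * h s = (c ^ (m+1) - (c - F r) ^ (m+1)) / (m+1) := e1
      replace e2 : ∫ s in u..v, (c - F s) ^ m * h s = (c ^ (m+1) - W ^ (m+1)) / (m+1) := e2
      have : ∫ s in r..v, (c - F s) ^ m * h s = ((c - F r) ^ (m+1) - W ^ (m+1)) / (m+1) := by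
        rw [e1, e2] at hsplit
        field_simp at hsplit ⊢
        linarith
      rw [this]
      ring
    have swap2 : ∫ s in u..v, F s * ((c - F s) ^ m * h s)
        = ∫ r in u..v, h r * ((c - F r) ^ (m+1) - W ^ (m+1)) / (m+1) := by
      rw [swap]; exact integral_congr inner
    -- expand the last integral
    have expand : ∫ r in u..v, h r * ((c - F r) ^ (m+1) - W ^ (m+1)) / (m+1)
        = (I - W ^ (m+1) * (c - W)) / (m+1) := by
      have hWint : IntervalIntegrable (fun r => W ^ (m+1) / (m+1) * h r) volume u v :=
        (hh.intervalIntegrable).const_mul _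
      have : (fun r => h r * ((c - F r) ^ (m+1) - W ^ (m+1)) / (m+1))
          = fun r => (1/((m:ℝ)+1)) * ((c - F r) ^ (m+1) * h r) - W ^ (m+1) / (m+1) * h r := by
        funext r; ring
      rw [this, integral_sub ((hGint (m+1) u v).const_mul _) hWint,
        intervalIntegral.integral_const_mul, intervalIntegral.integral_const_mul]
      have hFv : ∫ r in u..v, h r = c - W := by rw [hW]; ring
      rw [hFv, ← hI]
      push_cast
      ring
    -- ih for the first term
    have first : ∫ s in u..v, c * ((c - F s) ^ m * h s)
        = c * ((c ^ (m+1) - W ^ (m+1)) / (m+1)) := by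
      rw [intervalIntegral.integral_const_mul]
      have := ih u v c huv
      replace this : ∫ s in u..v, (c - F s) ^ m * h s = (c ^ (m+1) - W ^ (m+1)) / (m+1) := this
      rw [this]
    have final := split
    rw [first, swap2, expand] at final
    have hm1 : ((m:ℝ) + 1) ≠ 0 := by positivity
    have hm2 : ((m:ℝ) + 1 + 1) ≠ 0 := by positivity
    push_cast
    field_simp at final ⊢
    ring_nf at final ⊢
    linarith

lemma jumpalg (x y : ℝ) (n : ℕ) (hn : 1 ≤ n) :
    x ^ n - (x - y) ^ n
      = (n:ℝ) * (x ^ (n-1) * y)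
        + ∑ i ∈ Finset.Icc 2 n, (-1:ℝ) ^ (i-1) * (n.choose i : ℝ) * (x ^ (n-i) * y ^ i) := by
  have expand : (x - y) ^ n
      = ∑ m ∈ Finset.range (n+1), (-1:ℝ) ^ (m+n) * x ^ m * y ^ (n-m) * n.choose m :=
    sub_pow x y n
  rw [expand, Finset.sum_range_succ]
  have hlast : (-1:ℝ) ^ (n+n) * x ^ n * y ^ (n-n) * n.choose n = x ^ n := by
    simp [← two_mul, pow_mul]
  rw [hlast]
  have reindex : ∑ m ∈ Finset.range n, (-1:ℝ) ^ (m+n) * x ^ m * y ^ (n-m) * n.choose m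
      = ∑ i ∈ Finset.Icc 1 n, (-1:ℝ) ^ i * (n.choose i : ℝ) * (x ^ (n-i) * y ^ i) := by
    refine Finset.sum_nbij' (fun m => n - m) (fun i => n - i) ?_ ?_ ?_ ?_ ?_
    · intro m hm; simp only [Finset.mem_range] at hm; simp only [Finset.mem_Icc]; omega
    · intro i hi; simp only [Finset.mem_Icc] at hi; simp only [Finset.mem_range]; omega
    · intro m hm; simp only [Finset.mem_range] at hm; show n - (n - m) = m; omega
    · intro i hi; simp only [Finset.mem_Icc] at hi; show n - (n - i) = i; omega
    · intro m hm
      simp only [Finset.mem_range] at hm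
      show _ = (-1:ℝ) ^ (n - m) * (n.choose (n-m) : ℝ) * (x ^ (n - (n - m)) * y ^ (n - m))
      have h1 : n - (n - m) = m := by omega
      have h2 : n.choose (n - m) = n.choose m := Nat.choose_symm (by omega)
      have h3 : (-1:ℝ) ^ (m + n) = (-1:ℝ) ^ (n - m) := by
        rw [show m + n = (n - m) + 2 * m by omega, pow_add]
        simp [pow_mul]
      rw [h1, h2, h3]
      ring
  rw [reindex]
  have hsplit : Finset.Icc 1 n = insert 1 (Finset.Icc 2 n) := by
    ext i; simp only [Finset.mem_Icc, Finset.mem_insert]; omega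
  rw [hsplit, Finset.sum_insert (by simp)]
  simp only [pow_one, Nat.choose_one_right]
  rw [show ∀ z : ℝ, x ^ n - (z + x ^ n) = -z from fun z => by ring]
  rw [neg_add, ← Finset.sum_neg_distrib]
  congr 1
  · push_cast; ring
  · refine Finset.sum_congr rfl (fun i hi => ?_)
    simp only [Finset.mem_Icc] at hi
    have : (-1:ℝ) ^ (i - 1) = -(-1:ℝ) ^ i := by
      rw [show i = (i - 1) + 1 by omega, pow_succ]
      simp
    rw [this]
    ring

lemma tildeA_intInt (J : Finset ℝ) (a h : ℝ → ℝ) (hh : Integrable h volume)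
    (c₀ t₀ : ℝ) (k : ℕ) (p q : ℝ) :
    IntervalIntegrable
      (fun s => (c₀ + (∑ r ∈ J.filter (fun r => r ≤ s), a r) - ∫ x in t₀..s, h x) ^ k * h s)
      volume p q := by
  have main : ∀ p q : ℝ, IntegrableOn
      (fun s => (c₀ + (∑ r ∈ J.filter (fun r => r ≤ s), a r) - ∫ x in t₀..s, h x) ^ k * h s)
      (Ioc p q) volume := by
    intro p q
    set Af : ℝ → ℝ := fun s => c₀ + (∑ r ∈ J.filter (fun r => r ≤ s), a r) - ∫ x in t₀..s, h x
      with hAf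
    have hjump : ∀ s : ℝ, (∑ r ∈ J.filter (fun r => r ≤ s), a r)
        = ∑ r ∈ J, if r ≤ s then a r else 0 := fun s => Finset.sum_filter _ _
    have hmeasJ : Measurable fun s : ℝ => ∑ r ∈ J.filter (fun r => r ≤ s), a r := by
      simp only [hjump]
      refine Finset.measurable_sum _ (fun r _ => ?_)
      exact Measurable.ite measurableSet_Ici measurable_const measurable_const
    have hFc : Continuous fun s : ℝ => ∫ x in t₀..s, h x := hh.continuous_primitive t₀
    have hmeasA : Measurable Af := ((measurable_const.add hmeasJ).sub hFc.measurable)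
    -- bound on Icc p q
    obtain ⟨C, hC⟩ : ∃ C, ∀ s ∈ Icc p q, ‖(fun s : ℝ => ∫ x in t₀..s, h x) s‖ ≤ C :=
      isCompact_Icc.exists_bound_of_continuousOn hFc.continuousOn
    set M : ℝ := |c₀| + (∑ r ∈ J, |a r|) + C with hM
    have hMb : ∀ s ∈ Icc p q, |Af s| ≤ M := by
      intro s hs
      have h1 : |∑ r ∈ J.filter (fun r => r ≤ s), a r| ≤ ∑ r ∈ J, |a r| := by
        calc |∑ r ∈ J.filter (fun r => r ≤ s), a r| ≤ ∑ r ∈ J.filter (fun r => r ≤ s), |a r| :=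
              Finset.abs_sum_le_sum_abs _ _
          _ ≤ ∑ r ∈ J, |a r| :=
              Finset.sum_le_sum_of_subset_of_nonneg (Finset.filter_subset _ _)
                (fun _ _ _ => abs_nonneg _)
      have h2 := hC s hs
      simp only [Real.norm_eq_abs] at h2
      calc |Af s| ≤ |c₀| + |∑ r ∈ J.filter (fun r => r ≤ s), a r| + |∫ x in t₀..s, h x| := by
            simp only [hAf]; exact (abs_sub _ _).trans (by gcongr; exact abs_add_le _ _)
        _ ≤ M := by rw [hM]; gcongr
    set M0 : ℝ := max M 0 with hM0def
    have hM0 : 0 ≤ M0 := le_max_right _ _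
    have hbd : ∀ᵐ x ∂(volume.restrict (Ioc p q)), ‖Af x ^ k‖ ≤ M0 ^ k := by
      refine ae_restrict_of_forall_mem measurableSet_Ioc (fun x hx => ?_)
      have hx' : x ∈ Icc p q := Ioc_subset_Icc_self hx
      rw [norm_pow, Real.norm_eq_abs]
      exact pow_le_pow_left₀ (abs_nonneg _) (le_trans (hMb x hx') (le_max_left _ _)) k
    have := Integrable.bdd_mul (f := fun s => Af s ^ k) (g := h) (c := M0 ^ k)
      (hh.integrableOn) ((hmeasA.pow_const k).aestronglyMeasurable) hbd
    exact this
  exact ⟨main p q, main q p⟩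

lemma main_thm (a h : ℝ → ℝ) (hh : Integrable h volume) (J : Finset ℝ) :
    ∀ (t₀ t c₀ : ℝ) (A : ℝ → ℝ), t₀ ≤ t →
      (∀ r ∈ J, t₀ < r ∧ r ≤ t) →
      (∀ s ∈ Set.Icc t₀ t, A s = c₀ + (∑ r ∈ J.filter (fun r => r ≤ s), a r) - ∫ x in t₀..s, h x) →
      ∀ n : ℕ, 1 ≤ n →
      A t ^ n - A t₀ ^ n
        = (n:ℝ) * ((∑ r ∈ J, A r ^ (n-1) * a r) - ∫ s in t₀..t, A s ^ (n-1) * h s)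
          + ∑ i ∈ Finset.Icc 2 n, (-1:ℝ) ^ (i-1) * (n.choose i : ℝ) *
              ∑ r ∈ J, A r ^ (n-i) * a r ^ i := by
  induction J using Finset.induction_on_max with
  | empty =>
    intro t₀ t c₀ A htt hJ hA n hn
    obtain ⟨m, rfl⟩ : ∃ m, n = m + 1 := ⟨n - 1, by omega⟩
    have hAt₀ : A t₀ = c₀ := by
      have := hA t₀ ⟨le_refl _, htt⟩
      simpa using this
    have hint : ∫ s in t₀..t, A s ^ (m + 1 - 1) * h s
        = ∫ s in t₀..t, (c₀ - ∫ x in t₀..s, h x) ^ m * h s := by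
      refine integral_congr (fun s hs => ?_)
      rw [uIcc_of_le htt] at hs
      have := hA s hs
      simp only [Finset.filter_empty, Finset.sum_empty, add_zero] at this
      rw [this]
      norm_num
    have hAt : A t = c₀ - ∫ x in t₀..t, h x := by
      have := hA t ⟨htt, le_refl _⟩
      simpa using this
    have hkey := key_pow h hh m t₀ t c₀ htt
    simp only [Finset.sum_empty, Finset.mul_sum, mul_zero, Finset.sum_const_zero, add_zero,
      zero_sub]
    rw [hint, hkey, hAt, hAt₀]
    have hm : ((m:ℝ) + 1) ≠ 0 := by positivity
    push_cast
    field_simp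
    ring
  | insert b J' hbmax ih =>
    intro t₀ t c₀ A htt hJ hA n hn
    have hbJ' : b ∉ J' := fun hmem => lt_irrefl b (hbmax b hmem)
    have hb : t₀ < b ∧ b ≤ t := hJ b (Finset.mem_insert_self _ _)
    set A' : ℝ → ℝ :=
      fun s => c₀ + (∑ r ∈ J'.filter (fun r => r ≤ s), a r) - ∫ x in t₀..s, h x with hA'
    -- A agrees with A' strictly below b
    have hAA' : ∀ s ∈ Set.Icc t₀ t, s < b → A s = A' s := by
      intro s hs hsb
      rw [hA s hs, hA']
      have : (insert b J').filter (fun r => r ≤ s) = J'.filter (fun r => r ≤ s) := by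
        rw [Finset.filter_insert, if_neg (not_le.mpr hsb)]
      rw [this]
    -- value of A at b
    have hAb : A b = A' b + a b := by
      rw [hA b ⟨hb.1.le, hb.2⟩, hA']
      have h1 : (insert b J').filter (fun r => r ≤ b) = insert b (J'.filter (fun r => r ≤ b)) := by
        rw [Finset.filter_insert, if_pos le_rfl]
      have h2 : b ∉ J'.filter (fun r => r ≤ b) := fun hmem => hbJ' (Finset.mem_of_mem_filter _ hmem)
      rw [h1, Finset.sum_insert h2]
      ring
    -- initial values
    have hAt₀ : A t₀ = c₀ := by
      rw [hA t₀ ⟨le_refl _, htt⟩]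
      have : (insert b J').filter (fun r => r ≤ t₀) = ∅ :=
        Finset.filter_false_of_mem (fun r hr => not_le.mpr (hJ r hr).1)
      simp [this]
    have hA't₀ : A' t₀ = c₀ := by
      rw [hA']
      have : J'.filter (fun r => r ≤ t₀) = ∅ :=
        Finset.filter_false_of_mem
          (fun r hr => not_le.mpr (hJ r (Finset.mem_insert_of_mem hr)).1)
      simp [this]
    -- A r = A' r for r in J'
    have hAr : ∀ r ∈ J', A r = A' r := by
      intro r hr
      have hrb : r < b := hbmax r hr
      have hrt : t₀ < r ∧ r ≤ t := hJ r (Finset.mem_insert_of_mem hr)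
      exact hAA' r ⟨hrt.1.le, hrt.2⟩ hrb
    -- on [b, t], A s = A b - ∫_b^s h
    have hseg : ∀ s ∈ Set.Icc b t, A s = A b - ∫ x in b..s, h x := by
      intro s hs
      have hst : s ∈ Set.Icc t₀ t := ⟨hb.1.le.trans hs.1, hs.2⟩
      have hfull : ∀ u : ℝ, b ≤ u → (insert b J').filter (fun r => r ≤ u) = insert b J' := by
        intro u hu
        refine Finset.filter_true_of_mem (fun r hr => ?_)
        rcases Finset.mem_insert.mp hr with rfl | hr'
        · exact hu
        · exact (hbmax r hr').le.trans hu
      have hadd : (∫ x in t₀..b, h x) + ∫ x in b..s, h x = ∫ x in t₀..s, h x :=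
        integral_add_adjacent_intervals hh.intervalIntegrable hh.intervalIntegrable
      rw [hA s hst, hA b ⟨hb.1.le, hb.2⟩, hfull s hs.1, hfull b le_rfl, ← hadd]
      ring
    obtain ⟨m, hm⟩ : ∃ m, n = m + 1 := ⟨n - 1, by omega⟩
    -- integral over [b, t]
    have hf5 : A t ^ n - A b ^ n = -(n:ℝ) * ∫ s in b..t, A s ^ (n-1) * h s := by
      have hcong : ∫ s in b..t, A s ^ (n-1) * h s
          = ∫ s in b..t, (A b - ∫ x in b..s, h x) ^ m * h s := by
        refine integral_congr (fun s hs => ?_)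
        rw [uIcc_of_le hb.2] at hs
        rw [hseg s hs, hm]
        norm_num
      have hkey := key_pow h hh m b t (A b) hb.2
      have hAt : A t = A b - ∫ x in b..t, h x := hseg t ⟨hb.2, le_refl _⟩
      rw [hcong, hkey, ← hAt, hm]
      have hm1 : ((m:ℝ) + 1) ≠ 0 := by positivity
      push_cast
      field_simp
      ring
    -- interval integrability of A^(n-1) * h on subintervals of [t₀, t]
    have hAint : ∀ p q : ℝ, t₀ ≤ p → q ≤ t → p ≤ q →
        IntervalIntegrable (fun s => A s ^ (n-1) * h s) volume p q := by
      intro p q hp hq hpq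
      rw [intervalIntegrable_iff_integrableOn_Ioc_of_le hpq]
      have base := (tildeA_intInt (insert b J') a h hh c₀ t₀ (n-1) p q).1
      refine base.congr_fun (fun s hs => ?_) measurableSet_Ioc
      have : s ∈ Set.Icc t₀ t := ⟨hp.trans hs.1.le, hs.2.trans hq⟩
      rw [hA s this]
    -- split the full integral
    have hsplit : (∫ s in t₀..b, A s ^ (n-1) * h s) + ∫ s in b..t, A s ^ (n-1) * h s
        = ∫ s in t₀..t, A s ^ (n-1) * h s :=
      integral_add_adjacent_intervals (hAint t₀ b (le_refl _) hb.2 hb.1.le)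
        (hAint b t hb.1.le (le_refl _) hb.2)
    -- the inductive hypothesis
    have IH := ih t₀ b c₀ A' hb.1.le
      (fun r hr => ⟨(hJ r (Finset.mem_insert_of_mem hr)).1, (hbmax r hr).le⟩)
      (fun s _ => rfl) n hn
    -- replace A' by A in IH sums
    have e1 : ∑ r ∈ J', A' r ^ (n-1) * a r = ∑ r ∈ J', A r ^ (n-1) * a r :=
      Finset.sum_congr rfl (fun r hr => by rw [hAr r hr])
    have e2 : ∀ i : ℕ, (∑ r ∈ J', A' r ^ (n-i) * a r ^ i) = ∑ r ∈ J', A r ^ (n-i) * a r ^ i :=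
      fun i => Finset.sum_congr rfl (fun r hr => by rw [hAr r hr])
    -- replace the integral in IH
    have e3 : ∫ s in t₀..b, A' s ^ (n-1) * h s = ∫ s in t₀..b, A s ^ (n-1) * h s := by
      rw [integral_of_le hb.1.le, integral_of_le hb.1.le,
        integral_Ioc_eq_integral_Ioo, integral_Ioc_eq_integral_Ioo]
      refine setIntegral_congr_fun measurableSet_Ioo (fun s hs => ?_)
      rw [hAA' s ⟨hs.1.le, hs.2.le.trans hb.2⟩ hs.2]
    rw [e1, e3] at IH
    simp only [e2] at IH
    rw [hA't₀, ← hAt₀] at IH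
    -- the jump identity at b
    have hjump : A b ^ n - A' b ^ n
        = (n:ℝ) * (A b ^ (n-1) * a b)
          + ∑ i ∈ Finset.Icc 2 n, (-1:ℝ) ^ (i-1) * (n.choose i : ℝ) * (A b ^ (n-i) * a b ^ i) := by
      have : A' b = A b - a b := by rw [hAb]; ring
      rw [this]
      exact jumpalg (A b) (a b) n hn
    -- split the sums over insert b J' in the goal
    rw [Finset.sum_insert hbJ', ← hsplit]
    have Esplit : ∑ i ∈ Finset.Icc 2 n, (-1:ℝ) ^ (i-1) * (n.choose i : ℝ) *
          ∑ r ∈ insert b J', A r ^ (n-i) * a r ^ i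
        = (∑ i ∈ Finset.Icc 2 n, (-1:ℝ) ^ (i-1) * (n.choose i : ℝ) * (A b ^ (n-i) * a b ^ i))
          + ∑ i ∈ Finset.Icc 2 n, (-1:ℝ) ^ (i-1) * (n.choose i : ℝ) *
              ∑ r ∈ J', A r ^ (n-i) * a r ^ i := by
      rw [← Finset.sum_add_distrib]
      refine Finset.sum_congr rfl (fun i _ => ?_)
      rw [Finset.sum_insert hbJ']
      ring
    rw [Esplit]
    linear_combination hf5 + hjump + IH

/-- Deterministic (pathwise) form of the first formula of Theorem 2.1. -/
theorem stmt0 (t : ℝ) (ht : 0 < t) (J : Finset ℝ) (hJ : ∀ r ∈ J, 0 < r ∧ r ≤ t)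
    (a h : ℝ → ℝ) (hh : IntegrableOn h (Set.Icc 0 t))
    (A : ℝ → ℝ)
    (hA : ∀ s, A s = (∑ r ∈ J.filter (fun r => r ≤ s), a r) - ∫ u in (0:ℝ)..s, h u)
    (n : ℕ) (hn : 1 ≤ n) :
    A t ^ n
      = (n : ℝ) * ((∑ r ∈ J, A r ^ (n - 1) * a r) - ∫ s in (0:ℝ)..t, A s ^ (n - 1) * h s)
        + ∑ i ∈ Finset.Icc 2 n, (-1 : ℝ) ^ (i - 1) * (n.choose i : ℝ) *
            ∑ r ∈ J, A r ^ (n - i) * a r ^ i := by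
  set ht' : ℝ → ℝ := (Set.Icc (0:ℝ) t).indicator h with hht'
  have hint : Integrable ht' volume := (integrable_indicator_iff measurableSet_Icc).2 hh
  have hA' : ∀ s ∈ Set.Icc (0:ℝ) t, A s
      = 0 + (∑ r ∈ J.filter (fun r => r ≤ s), a r) - ∫ x in (0:ℝ)..s, ht' x := by
    intro s hs
    rw [hA s, zero_add]
    have : ∫ u in (0:ℝ)..s, h u = ∫ x in (0:ℝ)..s, ht' x := by
      refine integral_congr (fun x hx => ?_)
      rw [uIcc_of_le hs.1] at hx
      rw [hht', Set.indicator_of_mem (show x ∈ Set.Icc (0:ℝ) t from ⟨hx.1, hx.2.trans hs.2⟩) h]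
    rw [this]
  have hA0 : A 0 = 0 := by
    rw [hA 0]
    have : J.filter (fun r => r ≤ (0:ℝ)) = ∅ :=
      Finset.filter_false_of_mem (fun r hr => not_le.mpr (hJ r hr).1)
    simp [this]
  have main := main_thm a ht' hint J 0 t 0 A ht.le hJ hA' n hn
  rw [hA0] at main
  have hzero : (0:ℝ) ^ n = 0 := zero_pow (by omega)
  rw [hzero, sub_zero] at main
  have : ∫ s in (0:ℝ)..t, A s ^ (n-1) * h s = ∫ s in (0:ℝ)..t, A s ^ (n-1) * ht' s := by
    refine integral_congr (fun s hs => ?_)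
    rw [uIcc_of_le ht.le] at hs
    rw [hht', Set.indicator_of_mem (show s ∈ Set.Icc (0:ℝ) t from hs) h]
  rw [this]
  exact main
end

section
/- Let t > 0, let J ⊂ (0, t] be a finite set, let a : ℝ → ℝ, and let h : [0, t] → ℝ be Lebesgue integrable. Define A : [0, t] → ℝ by A(s) = Σ_{r ∈ J, r ≤ s} a(r) − ∫₀ˢ h(u) du. Then for every integer n ≥ 1: A(t)^n = n·( Σ_{r ∈ J} (A(t) − A(r))^{n−1} a(r) − ∫₀ᵗ (A(t) − A(s))^{n−1} h(s) ds ) + Σ_{i=2}^{n} binom(n, i) · Σ_{r ∈ J} (A(t) − A(r))^{n−i} a(r)^{i}. -/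
open MeasureTheory Set

lemma int_cont {α β : ℝ} {h : ℝ → ℝ} (hh : IntegrableOn h (Set.Icc α β))
    {φ : ℝ → ℝ} (hφ : ContinuousOn φ (Set.Icc α β)) :
    IntegrableOn (fun s => φ s * h s) (Set.Icc α β) := by
  obtain ⟨C, hC⟩ := isCompact_Icc.exists_bound_of_continuousOn hφ
  refine Integrable.bdd_mul (c := C) hh (hφ.aestronglyMeasurable measurableSet_Icc) ?_
  filter_upwards [ae_restrict_mem measurableSet_Icc] with x hx using hC x hx

lemma triangle_swap {a b : ℝ} (hab : a ≤ b) {f g : ℝ → ℝ}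
    (hf : IntegrableOn f (Set.Ioc a b)) (hg : IntegrableOn g (Set.Ioc a b)) :
    ∫ s in a..b, (∫ u in a..s, f u) * g s = ∫ u in a..b, f u * (∫ s in u..b, g s) := by
  have hS : MeasurableSet {q : ℝ × ℝ | q.2 ≤ q.1} := measurableSet_le measurable_snd measurable_fst
  set Φ : ℝ → ℝ → ℝ := fun s u => if u ≤ s then f u * g s else 0 with hΦ
  have hint : Integrable (Function.uncurry Φ)
      ((volume.restrict (Set.Ioc a b)).prod (volume.restrict (Set.Ioc a b))) := by
    have base : Integrable (fun z : ℝ × ℝ => g z.1 * f z.2)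
        ((volume.restrict (Set.Ioc a b)).prod (volume.restrict (Set.Ioc a b))) :=
      Integrable.mul_prod hg hf
    have : Function.uncurry Φ
        = {q : ℝ × ℝ | q.2 ≤ q.1}.indicator (fun z : ℝ × ℝ => g z.1 * f z.2) := by
      funext p
      by_cases hp : p.2 ≤ p.1 <;>
        simp [Function.uncurry, hΦ, Set.indicator_apply, hp, mul_comm]
    rw [this]
    exact base.indicator hS
  have swap := integral_integral_swap hint
  rw [intervalIntegral.integral_of_le hab, intervalIntegral.integral_of_le hab]
  calc ∫ s in Set.Ioc a b, (∫ u in a..s, f u) * g s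
      = ∫ s in Set.Ioc a b, ∫ u in Set.Ioc a b, Φ s u := by
        refine setIntegral_congr_fun measurableSet_Ioc (fun s hs => ?_)
        have h1 : ∀ u, Φ s u = (Set.Iic s).indicator (fun u => f u * g s) u := by
          intro u; by_cases hu : u ≤ s <;> simp [hΦ, Set.indicator_apply, hu]
        simp_rw [h1]
        rw [setIntegral_indicator measurableSet_Iic, Set.Ioc_inter_Iic,
          min_eq_right hs.2, intervalIntegral.integral_of_le hs.1.le, integral_mul_const]
    _ = ∫ u in Set.Ioc a b, ∫ s in Set.Ioc a b, Φ s u := swap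
    _ = ∫ u in Set.Ioc a b, f u * (∫ s in u..b, g s) := by
        refine setIntegral_congr_fun measurableSet_Ioc (fun u hu => ?_)
        have h1 : ∀ s, Φ s u = (Set.Ici u).indicator (fun s => f u * g s) s := by
          intro s; by_cases hs : u ≤ s <;> simp [hΦ, Set.indicator_apply, hs]
        simp_rw [h1]
        have h2 : Set.Ioc a b ∩ Set.Ici u = Set.Icc u b := by
          ext x
          constructor
          · rintro ⟨⟨_, hxb⟩, hux⟩; exact ⟨hux, hxb⟩
          · rintro ⟨hux, hxb⟩; exact ⟨⟨lt_of_lt_of_le hu.1 hux, hxb⟩, hux⟩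
        rw [setIntegral_indicator measurableSet_Ici, h2, integral_Icc_eq_integral_Ioc,
          intervalIntegral.integral_of_le hu.2, integral_const_mul]

noncomputable def primit (h : ℝ → ℝ) (s : ℝ) : ℝ := ∫ u in (0:ℝ)..s, h u

noncomputable def jsum (J : Finset ℝ) (a : ℝ → ℝ) (s : ℝ) : ℝ :=
  ∑ r ∈ J.filter (fun r => r ≤ s), a r

lemma primit_cont {t : ℝ} {h : ℝ → ℝ} (hh : IntegrableOn h (Set.Icc 0 t)) (ht : 0 ≤ t) :
    ContinuousOn (primit h) (Set.Icc 0 t) := by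
  have := intervalIntegral.continuousOn_primitive_interval (a := (0:ℝ)) (b := t) (μ := volume)
    (f := h) (by rwa [Set.uIcc_of_le ht])
  rwa [Set.uIcc_of_le ht] at this

lemma int_aux' {t : ℝ} {h : ℝ → ℝ} (hh : IntegrableOn h (Set.Icc 0 t))
    {φ : ℝ → ℝ} (hφm : AEStronglyMeasurable φ (volume.restrict (Set.Icc 0 t)))
    {C : ℝ} (hφb : ∀ x ∈ Set.Icc 0 t, ‖φ x‖ ≤ C) {α β : ℝ} (hα : 0 ≤ α) (hβ : β ≤ t) :
    IntegrableOn (fun s => φ s * h s) (Set.Icc α β) := by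
  have hsub : Set.Icc α β ⊆ Set.Icc 0 t := fun x hx => ⟨hα.trans hx.1, hx.2.trans hβ⟩
  refine Integrable.bdd_mul (c := C) (hh.mono_set hsub)
    (hφm.mono_measure (Measure.restrict_mono hsub le_rfl)) ?_
  filter_upwards [ae_restrict_mem measurableSet_Icc] with x hx
  exact hφb x (hsub hx)

lemma jsum_meas (J : Finset ℝ) (a : ℝ → ℝ) : Measurable (jsum J a) := by
  have : jsum J a = fun s => ∑ r ∈ J, Set.indicator (Set.Ici r) (fun _ => a r) s := by
    funext s
    rw [jsum, Finset.sum_filter]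
    refine Finset.sum_congr rfl (fun r _ => ?_)
    by_cases hr : r ≤ s <;> simp [Set.indicator_apply, Set.mem_Ici, hr]
  rw [this]
  exact Finset.measurable_sum _ (fun r _ => Measurable.indicator measurable_const measurableSet_Ici)

lemma jsum_bound (J : Finset ℝ) (a : ℝ → ℝ) (s : ℝ) : |jsum J a s| ≤ ∑ r ∈ J, |a r| :=
  (Finset.abs_sum_le_sum_abs _ _).trans
    (Finset.sum_le_sum_of_subset_of_nonneg (Finset.filter_subset _ _)
      (fun r _ _ => abs_nonneg _))

lemma AJ_int {t : ℝ} {h : ℝ → ℝ} (hh : IntegrableOn h (Set.Icc 0 t)) (ht : 0 ≤ t)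
    (J : Finset ℝ) (a : ℝ → ℝ) (c : ℝ) (m : ℕ) {α β : ℝ} (hα : 0 ≤ α) (hβ : β ≤ t) :
    IntegrableOn (fun s => (c - (jsum J a s - primit h s)) ^ m * h s) (Set.Icc α β) := by
  obtain ⟨CH, hCH⟩ := isCompact_Icc.exists_bound_of_continuousOn (primit_cont hh ht)
  have hφm : AEStronglyMeasurable (fun s => (c - (jsum J a s - primit h s)) ^ m)
      (volume.restrict (Set.Icc 0 t)) := by
    refine AEMeasurable.aestronglyMeasurable ?_
    exact (aemeasurable_const.sub (((jsum_meas J a).aemeasurable).sub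
      ((primit_cont hh ht).aemeasurable measurableSet_Icc))).pow_const m
  refine int_aux' hh hφm (C := (|c| + (∑ r ∈ J, |a r| + CH)) ^ m) (fun x hx => ?_) hα hβ
  rw [norm_pow, Real.norm_eq_abs]
  refine pow_le_pow_left₀ (abs_nonneg _) ?_ m
  calc |c - (jsum J a x - primit h x)| ≤ |c| + |jsum J a x - primit h x| := abs_sub _ _
    _ ≤ |c| + (|jsum J a x| + |primit h x|) := by
        gcongr; exact abs_sub _ _
    _ ≤ |c| + (∑ r ∈ J, |a r| + CH) := by
        gcongr
        · exact jsum_bound J a x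
        · have := hCH x hx; rwa [Real.norm_eq_abs] at this

lemma key {t : ℝ} {h : ℝ → ℝ} (hh : IntegrableOn h (Set.Icc 0 t)) (c : ℝ) :
    ∀ (m : ℕ) (a b : ℝ), 0 ≤ a → a ≤ b → b ≤ t →
      ((m : ℝ) + 1) * ∫ s in a..b, (c + primit h s) ^ m * h s
        = (c + primit h b) ^ (m + 1) - (c + primit h a) ^ (m + 1) := by
  intro m
  induction m with
  | zero =>
    intro a b h0a hab hbt
    have ht : (0:ℝ) ≤ t := h0a.trans (hab.trans hbt)
    have h1 : IntervalIntegrable h volume 0 a :=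
      (intervalIntegrable_iff_integrableOn_Icc_of_le h0a).mpr
        (hh.mono_set (Set.Icc_subset_Icc le_rfl (hab.trans hbt)))
    have h2 : IntervalIntegrable h volume a b :=
      (intervalIntegrable_iff_integrableOn_Icc_of_le hab).mpr
        (hh.mono_set (Set.Icc_subset_Icc h0a hbt))
    have hadd := intervalIntegral.integral_add_adjacent_intervals h1 h2
    simp only [pow_zero, one_mul, pow_one, Nat.cast_zero, zero_add]
    rw [primit, primit, ← hadd]
    ring
  | succ m IH =>
    intro a b h0a hab hbt
    have ht : (0:ℝ) ≤ t := h0a.trans (hab.trans hbt)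
    have hh' : IntegrableOn h (Set.Icc a b) := hh.mono_set (Set.Icc_subset_Icc h0a hbt)
    have hPc : ContinuousOn (primit h) (Set.Icc a b) :=
      (primit_cont hh ht).mono (Set.Icc_subset_Icc h0a hbt)
    have hfc : ContinuousOn (fun u => (c + primit h u) ^ m) (Set.Icc a b) :=
      (continuousOn_const.add hPc).pow m
    have hfint : IntegrableOn (fun u => (c + primit h u) ^ m * h u) (Set.Icc a b) :=
      int_cont hh' hfc
    have hf1c : ContinuousOn (fun u => (c + primit h u) ^ (m + 1)) (Set.Icc a b) :=
      (continuousOn_const.add hPc).pow (m + 1)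
    have hf1int : IntegrableOn (fun u => (c + primit h u) ^ (m + 1) * h u) (Set.Icc a b) :=
      int_cont hh' hf1c
    have hφc : ContinuousOn (fun s => ∫ u in a..s, (c + primit h u) ^ m * h u)
        (Set.Icc a b) := by
      have := intervalIntegral.continuousOn_primitive_interval (a := a) (b := b)
        (μ := volume) (f := fun u => (c + primit h u) ^ m * h u)
        (by rwa [Set.uIcc_of_le hab])
      rwa [Set.uIcc_of_le hab] at this
    have hsint : IntegrableOn
        (fun s => (∫ u in a..s, (c + primit h u) ^ m * h u) * h s) (Set.Icc a b) :=
      int_cont hh' hφc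
    -- pointwise IH
    have hIHpt : ∀ s ∈ Set.Icc a b, (c + primit h s) ^ (m + 1)
        = (c + primit h a) ^ (m + 1)
          + ((m : ℝ) + 1) * ∫ u in a..s, (c + primit h u) ^ m * h u := by
      intro s hs
      have := IH a s h0a hs.1 (hs.2.trans hbt)
      linarith [this]
    have step1 : ∫ s in a..b, (c + primit h s) ^ (m + 1) * h s
        = ∫ s in a..b, ((c + primit h a) ^ (m + 1) * h s
            + ((m : ℝ) + 1) * ((∫ u in a..s, (c + primit h u) ^ m * h u) * h s)) := by
      refine intervalIntegral.integral_congr (fun s hs => ?_)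
      rw [Set.uIcc_of_le hab] at hs
      rw [hIHpt s hs]; ring
    have hhi : IntervalIntegrable h volume a b :=
      (intervalIntegrable_iff_integrableOn_Icc_of_le hab).mpr hh'
    have hsi : IntervalIntegrable
        (fun s => (∫ u in a..s, (c + primit h u) ^ m * h u) * h s) volume a b :=
      (intervalIntegrable_iff_integrableOn_Icc_of_le hab).mpr hsint
    have step2 : ∫ s in a..b, ((c + primit h a) ^ (m + 1) * h s
            + ((m : ℝ) + 1) * ((∫ u in a..s, (c + primit h u) ^ m * h u) * h s))
        = (c + primit h a) ^ (m + 1) * (∫ s in a..b, h s)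
          + ((m : ℝ) + 1) * ∫ s in a..b,
              (∫ u in a..s, (c + primit h u) ^ m * h u) * h s := by
      rw [intervalIntegral.integral_add (hhi.const_mul _) (hsi.const_mul _),
        intervalIntegral.integral_const_mul, intervalIntegral.integral_const_mul]
    -- basic integral of h over a..b
    have hH : ∫ s in a..b, h s = primit h b - primit h a := by
      have h1 : IntervalIntegrable h volume 0 a :=
        (intervalIntegrable_iff_integrableOn_Icc_of_le h0a).mpr
          (hh.mono_set (Set.Icc_subset_Icc le_rfl (hab.trans hbt)))
      have hadd := intervalIntegral.integral_add_adjacent_intervals h1 hhi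
      rw [primit, primit, ← hadd]; ring
    -- Fubini
    have step3 : ∫ s in a..b, (∫ u in a..s, (c + primit h u) ^ m * h u) * h s
        = ∫ u in a..b, ((c + primit h u) ^ m * h u) * (∫ s in u..b, h s) :=
      triangle_swap hab (hfint.mono_set Set.Ioc_subset_Icc_self)
        (hh'.mono_set Set.Ioc_subset_Icc_self)
    have step4 : ∫ u in a..b, ((c + primit h u) ^ m * h u) * (∫ s in u..b, h s)
        = ∫ u in a..b, ((c + primit h b) * ((c + primit h u) ^ m * h u)
            - (c + primit h u) ^ (m + 1) * h u) := by
      refine intervalIntegral.integral_congr (fun u hu => ?_)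
      rw [Set.uIcc_of_le hab] at hu
      have h2 : IntervalIntegrable h volume u b :=
        (intervalIntegrable_iff_integrableOn_Icc_of_le hu.2).mpr
          (hh.mono_set (Set.Icc_subset_Icc (h0a.trans hu.1) hbt))
      have h1 : IntervalIntegrable h volume 0 u :=
        (intervalIntegrable_iff_integrableOn_Icc_of_le (h0a.trans hu.1)).mpr
          (hh.mono_set (Set.Icc_subset_Icc le_rfl (hu.2.trans hbt)))
      have hadd := intervalIntegral.integral_add_adjacent_intervals h1 h2
      have huv : ∫ s in u..b, h s = primit h b - primit h u := by
        rw [primit, primit, ← hadd]; ring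
      rw [huv]; ring
    have hfi : IntervalIntegrable (fun u => (c + primit h u) ^ m * h u) volume a b :=
      (intervalIntegrable_iff_integrableOn_Icc_of_le hab).mpr hfint
    have hf1i : IntervalIntegrable (fun u => (c + primit h u) ^ (m+1) * h u) volume a b :=
      (intervalIntegrable_iff_integrableOn_Icc_of_le hab).mpr hf1int
    have step5 : ∫ u in a..b, ((c + primit h b) * ((c + primit h u) ^ m * h u)
            - (c + primit h u) ^ (m + 1) * h u)
        = (c + primit h b) * (∫ u in a..b, (c + primit h u) ^ m * h u)
          - ∫ u in a..b, (c + primit h u) ^ (m + 1) * h u := by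
      rw [intervalIntegral.integral_sub (hfi.const_mul _) hf1i,
        intervalIntegral.integral_const_mul]
    have hIHab := IH a b h0a hab hbt
    have e1 := step1.trans step2
    have e2 := step3.trans (step4.trans step5)
    push_cast
    linear_combination e1 + (c + primit h a) ^ (m + 1) * hH + ((m : ℝ) + 1) * e2
      + (c + primit h b) * hIHab

lemma Lmain {t : ℝ} {h : ℝ → ℝ} (hh : IntegrableOn h (Set.Icc 0 t)) (ht : 0 ≤ t)
    (a : ℝ → ℝ) (m : ℕ) (c : ℝ) (J : Finset ℝ) :
    ∀ b, 0 ≤ b → b ≤ t → (∀ r ∈ J, 0 < r ∧ r ≤ b) →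
      ((m : ℝ) + 1) * ∫ s in (0:ℝ)..b, (c - (jsum J a s - primit h s)) ^ m * h s
        = (c - (jsum J a b - primit h b)) ^ (m + 1) - c ^ (m + 1)
          + ∑ r ∈ J, ((c - (jsum J a r - primit h r) + a r) ^ (m + 1)
              - (c - (jsum J a r - primit h r)) ^ (m + 1)) := by
  classical
  induction J using Finset.induction_on_max with
  | empty =>
    intro b hb0 hbt _
    have hje : ∀ s : ℝ, jsum (∅ : Finset ℝ) a s = 0 := by
      intro s; simp [jsum]
    have hcongr : ∫ s in (0:ℝ)..b, (c - (jsum (∅ : Finset ℝ) a s - primit h s)) ^ m * h s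
        = ∫ s in (0:ℝ)..b, (c + primit h s) ^ m * h s := by
      refine intervalIntegral.integral_congr (fun s _ => ?_)
      rw [hje s]; ring_nf
    rw [hcongr, key hh c m 0 b le_rfl hb0 hbt, hje b]
    have h0 : primit h 0 = 0 := by rw [primit, intervalIntegral.integral_same]
    rw [h0]
    simp only [Finset.sum_empty, add_zero, zero_sub, sub_neg_eq_add, add_zero]
  | insert r₀ J' hmax IH =>
    intro b hb0 hbt hJ
    have hr₀ := hJ r₀ (Finset.mem_insert_self _ _)
    have hr0pos : 0 < r₀ := hr₀.1
    have hr0b : r₀ ≤ b := hr₀.2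
    have hJ' : ∀ r ∈ J', 0 < r ∧ r ≤ r₀ :=
      fun r hr => ⟨(hJ r (Finset.mem_insert_of_mem hr)).1, (hmax r hr).le⟩
    have hr₀J' : r₀ ∉ J' := fun hmem => lt_irrefl r₀ (hmax r₀ hmem)
    -- jsum facts
    have f1 : ∀ s, s < r₀ → jsum (insert r₀ J') a s = jsum J' a s := by
      intro s hs
      rw [jsum, jsum, Finset.filter_insert, if_neg (not_le.mpr hs)]
    have f3 : ∀ s, r₀ ≤ s → jsum J' a s = ∑ r ∈ J', a r := by
      intro s hs
      rw [jsum]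
      refine Finset.sum_congr ?_ (fun _ _ => rfl)
      refine Finset.filter_true_of_mem (fun r hr => ?_)
      exact ((hmax r hr).le.trans hs)
    have f2 : ∀ s, r₀ ≤ s → jsum (insert r₀ J') a s = a r₀ + ∑ r ∈ J', a r := by
      intro s hs
      rw [jsum, Finset.filter_insert, if_pos hs, Finset.sum_insert
        (fun hmem => hr₀J' (Finset.mem_of_mem_filter r₀ hmem))]
      rw [← jsum, f3 s hs]
    -- split the integral
    have II1 : IntervalIntegrable
        (fun s => (c - (jsum (insert r₀ J') a s - primit h s)) ^ m * h s) volume 0 r₀ :=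
      (intervalIntegrable_iff_integrableOn_Icc_of_le hr0pos.le).mpr
        (AJ_int hh ht _ a c m le_rfl (hr0b.trans hbt))
    have II2 : IntervalIntegrable
        (fun s => (c - (jsum (insert r₀ J') a s - primit h s)) ^ m * h s) volume r₀ b :=
      (intervalIntegrable_iff_integrableOn_Icc_of_le hr0b).mpr
        (AJ_int hh ht _ a c m hr0pos.le hbt)
    have hsplit := intervalIntegral.integral_add_adjacent_intervals II1 II2
    -- part 1 : over 0..r₀, replace insert by J'
    have hae : ∀ᵐ s ∂(volume : Measure ℝ), s ∈ Set.uIoc (0:ℝ) r₀ →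
        (c - (jsum (insert r₀ J') a s - primit h s)) ^ m * h s
          = (c - (jsum J' a s - primit h s)) ^ m * h s := by
      have hne : ({r₀}ᶜ : Set ℝ) ∈ ae (volume : Measure ℝ) := by
        rw [mem_ae_iff, compl_compl]
        exact Real.volume_singleton
      filter_upwards [hne] with s hs hsI
      rw [Set.uIoc_of_le hr0pos.le] at hsI
      have : s < r₀ := lt_of_le_of_ne hsI.2 hs
      rw [f1 s this]
    have part1 : ∫ s in (0:ℝ)..r₀, (c - (jsum (insert r₀ J') a s - primit h s)) ^ m * h s
        = ∫ s in (0:ℝ)..r₀, (c - (jsum J' a s - primit h s)) ^ m * h s :=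
      intervalIntegral.integral_congr_ae hae
    have hIH := IH r₀ hr0pos.le (hr0b.trans hbt) hJ'
    -- part 2 : over r₀..b
    have part2 : ∫ s in r₀..b, (c - (jsum (insert r₀ J') a s - primit h s)) ^ m * h s
        = ∫ s in r₀..b, ((c - a r₀ - ∑ r ∈ J', a r) + primit h s) ^ m * h s := by
      refine intervalIntegral.integral_congr (fun s hs => ?_)
      rw [Set.uIcc_of_le hr0b] at hs
      rw [f2 s hs.1]
      ring_nf
    have hkey := key hh (c - a r₀ - ∑ r ∈ J', a r) m r₀ b hr0pos.le hr0b hbt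
    -- rewrite jsum values in goal
    rw [Finset.sum_insert hr₀J', f2 b hr0b, f2 r₀ le_rfl]
    have hsum' : ∑ r ∈ J', ((c - (jsum (insert r₀ J') a r - primit h r) + a r) ^ (m + 1)
          - (c - (jsum (insert r₀ J') a r - primit h r)) ^ (m + 1))
        = ∑ r ∈ J', ((c - (jsum J' a r - primit h r) + a r) ^ (m + 1)
          - (c - (jsum J' a r - primit h r)) ^ (m + 1)) := by
      refine Finset.sum_congr rfl (fun r hr => ?_)
      rw [f1 r (hmax r hr)]
    rw [hsum']
    -- combine; rewrite jsum J' a r₀ in hIH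
    rw [f3 r₀ le_rfl] at hIH
    linear_combination ((m : ℝ) + 1) * hsplit.symm + ((m : ℝ) + 1) * part1 + ((m : ℝ) + 1) * part2 + hIH + hkey

lemma binom_split (x y : ℝ) (m : ℕ) :
    (x + y) ^ (m + 1) - x ^ (m + 1)
      = ((m : ℝ) + 1) * x ^ m * y
        + ∑ i ∈ Finset.Icc 2 (m + 1), (((m + 1).choose i : ℕ) : ℝ) * x ^ (m + 1 - i) * y ^ i := by
  have hb : (x + y) ^ (m + 1)
      = ∑ k ∈ Finset.range (m + 2), y ^ k * x ^ (m + 1 - k) * ((m + 1).choose k : ℝ) := by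
    rw [add_comm x y, add_pow]
  rw [hb, Finset.sum_range_succ', Finset.sum_range_succ']
  have hIcc : ∑ i ∈ Finset.Icc 2 (m + 1), (((m + 1).choose i : ℕ) : ℝ) * x ^ (m + 1 - i) * y ^ i
      = ∑ i ∈ Finset.range m,
          (((m + 1).choose (i + 2) : ℕ) : ℝ) * x ^ (m + 1 - (i + 2)) * y ^ (i + 2) := by
    rw [← Finset.Ico_add_one_right_eq_Icc, Finset.sum_Ico_eq_sum_range]
    refine Finset.sum_congr rfl (fun i _ => by rw [add_comm 2 i])
  rw [hIcc]
  have hsc : ∑ i ∈ Finset.range m,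
        y ^ (i + 1 + 1) * x ^ (m + 1 - (i + 1 + 1)) * (((m + 1).choose (i + 1 + 1) : ℕ) : ℝ)
      = ∑ i ∈ Finset.range m,
          (((m + 1).choose (i + 2) : ℕ) : ℝ) * x ^ (m + 1 - (i + 2)) * y ^ (i + 2) := by
    refine Finset.sum_congr rfl (fun i _ => ?_)
    rw [show i + 1 + 1 = i + 2 from rfl]
    ring
  rw [hsc]
  rw [Nat.choose_one_right, Nat.choose_zero_right]
  push_cast
  ring

/-- Deterministic (pathwise) form of the second formula of Theorem 2.1. -/
theorem stmt1 (t : ℝ) (ht : 0 < t) (J : Finset ℝ) (hJ : ∀ r ∈ J, 0 < r ∧ r ≤ t)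
    (a h : ℝ → ℝ) (hh : IntegrableOn h (Set.Icc 0 t))
    (A : ℝ → ℝ)
    (hA : ∀ s, A s = (∑ r ∈ J.filter (fun r => r ≤ s), a r) - ∫ u in (0:ℝ)..s, h u)
    (n : ℕ) (hn : 1 ≤ n) :
    A t ^ n
      = (n : ℝ) * ((∑ r ∈ J, (A t - A r) ^ (n - 1) * a r)
            - ∫ s in (0:ℝ)..t, (A t - A s) ^ (n - 1) * h s)
        + ∑ i ∈ Finset.Icc 2 n, (n.choose i : ℝ) *
            ∑ r ∈ J, (A t - A r) ^ (n - i) * a r ^ i := by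
  obtain ⟨m, rfl⟩ : ∃ m, n = m + 1 := ⟨n - 1, (Nat.succ_pred_eq_of_pos hn).symm⟩
  have hAs : ∀ s, jsum J a s - primit h s = A s := fun s => (hA s).symm
  have hL := Lmain hh ht.le a m (A t) J t ht.le le_rfl hJ
  simp only [hAs] at hL
  rw [sub_self, zero_pow (Nat.succ_ne_zero m)] at hL
  have hbs : ∀ r : ℝ, (A t - A r + a r) ^ (m + 1) - (A t - A r) ^ (m + 1)
      = ((m : ℝ) + 1) * (A t - A r) ^ m * a r
        + ∑ i ∈ Finset.Icc 2 (m + 1),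
            (((m + 1).choose i : ℕ) : ℝ) * (A t - A r) ^ (m + 1 - i) * a r ^ i :=
    fun r => binom_split _ _ m
  simp only [hbs] at hL
  rw [Finset.sum_add_distrib] at hL
  simp only [mul_assoc] at hL
  rw [← Finset.mul_sum] at hL
  have hswap : ∑ i ∈ Finset.Icc 2 (m + 1), (((m + 1).choose i : ℕ) : ℝ)
        * ∑ r ∈ J, (A t - A r) ^ (m + 1 - i) * a r ^ i
      = ∑ r ∈ J, ∑ i ∈ Finset.Icc 2 (m + 1),
          (((m + 1).choose i : ℕ) : ℝ) * ((A t - A r) ^ (m + 1 - i) * a r ^ i) := by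
    simp_rw [Finset.mul_sum]
    rw [Finset.sum_comm]
  simp only [Nat.add_sub_cancel]
  push_cast
  linear_combination hL - hswap
end

section
/- For any two constants K with 0 < K < 1 and L > 0, there exists a constant C₀₃ > 0 (depending only on K and L) such that for every integer m ≥ 2: Σ_{i=2}^{m} Σ_{j=2}^{m−i} binom(m, i) · binom(m−i, j) · (m−i−j)! · L^{i−2} · L^{j−2} · K^{m−i−j} ≤ C₀₃ · m! · K^m. -/
open Finset in
lemma aux_sum_exp (S : ℝ) (hS : 0 ≤ S) (n : ℕ) :
    ∑ j ∈ Icc 2 n, S ^ (j - 2) / (j.factorial : ℝ) ≤ Real.exp S := by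
  calc ∑ j ∈ Icc 2 n, S ^ (j - 2) / (j.factorial : ℝ)
      ≤ ∑ j ∈ Icc 2 n, S ^ (j - 2) / ((j - 2).factorial : ℝ) := by
        apply Finset.sum_le_sum
        intro j hj
        gcongr
        omega
    _ = ∑ k ∈ range (n + 1 - 2), S ^ k / (k.factorial : ℝ) := by
        rw [← Finset.Ico_add_one_right_eq_Icc, Finset.sum_Ico_eq_sum_range]
        simp
    _ ≤ Real.exp S := Real.sum_le_exp_of_nonneg hS _

/-- Lemma 3.2. -/
theorem stmt4 (K L : ℝ) (hK0 : 0 < K) (hK1 : K < 1) (hL : 0 < L) :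
    ∃ C₀₃ > 0, ∀ m : ℕ, 2 ≤ m →
      ∑ i ∈ Finset.Icc 2 m, ∑ j ∈ Finset.Icc 2 (m - i),
          (m.choose i : ℝ) * ((m - i).choose j : ℝ) * ((m - i - j).factorial : ℝ) *
            L ^ (i - 2) * L ^ (j - 2) * K ^ (m - i - j)
        ≤ C₀₃ * (m.factorial : ℝ) * K ^ m := by
  have hK4 : (0:ℝ) < K ^ 4 := by positivity
  refine ⟨Real.exp (L / K) ^ 2 / K ^ 4, by positivity, ?_⟩
  intro m hm
  have hS : (0:ℝ) ≤ L / K := by positivity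
  set E := Real.exp (L / K) with hE
  have hE0 : 0 < E := Real.exp_pos _
  calc ∑ i ∈ Finset.Icc 2 m, ∑ j ∈ Finset.Icc 2 (m - i),
          (m.choose i : ℝ) * ((m - i).choose j : ℝ) * ((m - i - j).factorial : ℝ) *
            L ^ (i - 2) * L ^ (j - 2) * K ^ (m - i - j)
      ≤ ∑ i ∈ Finset.Icc 2 m, ∑ j ∈ Finset.Icc 2 (m - i),
          ((m.factorial : ℝ) * K ^ m / K ^ 4) * ((L / K) ^ (i - 2) / (i.factorial : ℝ)) *
            ((L / K) ^ (j - 2) / (j.factorial : ℝ)) := by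
        apply Finset.sum_le_sum
        intro i hi
        apply Finset.sum_le_sum
        intro j hj
        obtain ⟨hi2, him⟩ := Finset.mem_Icc.mp hi
        obtain ⟨hj2, hjm⟩ := Finset.mem_Icc.mp hj
        obtain ⟨a, rfl⟩ : ∃ a, i = a + 2 := ⟨i - 2, by omega⟩
        obtain ⟨b, rfl⟩ : ∃ b, j = b + 2 := ⟨j - 2, by omega⟩
        obtain ⟨c, rfl⟩ : ∃ c, m = a + 2 + (b + 2) + c := ⟨m - (a + 2) - (b + 2), by omega⟩
        have e1 : a + 2 + (b + 2) + c - (a + 2) = b + 2 + c := by omega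
        have e2 : b + 2 + c - (b + 2) = c := by omega
        have e3 : a + 2 - 2 = a := by omega
        have e4 : b + 2 - 2 = b := by omega
        rw [e1, e2, e3, e4]
        have hch : ((a + 2 + (b + 2) + c).choose (a + 2) * ((b + 2 + c).choose (b + 2)) *
            c.factorial) * ((a + 2).factorial * (b + 2).factorial)
            = (a + 2 + (b + 2) + c).factorial := by
          have h1 := Nat.choose_mul_factorial_mul_factorial
            (show a + 2 ≤ a + 2 + (b + 2) + c by omega)
          have h2 := Nat.choose_mul_factorial_mul_factorial
            (show b + 2 ≤ b + 2 + c by omega)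
          rw [e1] at h1
          rw [e2] at h2
          rw [← h1, ← h2]
          ring
        have hchR : (((a + 2 + (b + 2) + c).choose (a + 2) : ℝ) *
            ((b + 2 + c).choose (b + 2) : ℝ) * (c.factorial : ℝ)) *
            (((a + 2).factorial : ℝ) * ((b + 2).factorial : ℝ))
            = ((a + 2 + (b + 2) + c).factorial : ℝ) := by exact_mod_cast hch
        apply le_of_eq
        rw [← hchR]
        have hK : (K:ℝ) ≠ 0 := ne_of_gt hK0
        have hfa : ((a + 2).factorial : ℝ) ≠ 0 := by
          exact_mod_cast (Nat.factorial_pos _).ne'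
        have hfb : ((b + 2).factorial : ℝ) ≠ 0 := by
          exact_mod_cast (Nat.factorial_pos _).ne'
        rw [show a + 2 + (b + 2) + c = a + b + c + 4 by omega]
        rw [pow_add, pow_add, pow_add, div_pow, div_pow]
        field_simp
    _ = ((m.factorial : ℝ) * K ^ m / K ^ 4) *
          ∑ i ∈ Finset.Icc 2 m, ((L / K) ^ (i - 2) / (i.factorial : ℝ)) *
            ∑ j ∈ Finset.Icc 2 (m - i), (L / K) ^ (j - 2) / (j.factorial : ℝ) := by
        rw [Finset.mul_sum]
        refine Finset.sum_congr rfl fun i _ => ?_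
        rw [← Finset.mul_sum, mul_assoc]
    _ ≤ ((m.factorial : ℝ) * K ^ m / K ^ 4) *
          ∑ i ∈ Finset.Icc 2 m, ((L / K) ^ (i - 2) / (i.factorial : ℝ)) * E := by
        apply mul_le_mul_of_nonneg_left _ (by positivity)
        apply Finset.sum_le_sum
        intro i hi
        exact mul_le_mul_of_nonneg_left (aux_sum_exp _ hS _) (by positivity)
    _ ≤ ((m.factorial : ℝ) * K ^ m / K ^ 4) * (E * E) := by
        rw [← Finset.sum_mul]
        apply mul_le_mul_of_nonneg_left _ (by positivity)
        exact mul_le_mul_of_nonneg_right (aux_sum_exp _ hS _) hE0.le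
    _ = E ^ 2 / K ^ 4 * (m.factorial : ℝ) * K ^ m := by ring
end
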